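/- arXiv:1608.07443 — 2 statements merged into one kernel-verified Lean document; each statement's English description precedes it below -/
import Mathlib

section
/- Extinction of the informed compartment: if S(0) ≥ 0, I(0) ≥ 0, and R(0) ≥ 0, then I(t) → 0 as t → ∞. -/
/-!
Both `I` and `S` stay nonnegative, since each solves a linear equation `f' = a f` with continuous
coefficient. Hence `S` and `S + I` are nonincreasing (their derivatives are `-b I S` and `-c I`) and
bounded below by `0`, so both converge, and so does `I`. A convergent function whose derivative
has a limit has derivative tending to `0`; applied to `S + I` this gives `c · lim I = 0`.
-/

open Filter Set Topology

theorem monotoneOn_Ici_of_hasDerivAt_nonneg {f f' : ℝ → ℝ} {a : ℝ}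
    (hf : ∀ t ≥ a, HasDerivAt f (f' t) t) (hf' : ∀ t ≥ a, 0 ≤ f' t) : MonotoneOn f (Ici a) :=
  monotoneOn_of_hasDerivWithinAt_nonneg (convex_Ici a)
    (fun t ht => (hf t ht).continuousAt.continuousWithinAt)
    (fun t ht => (hf t (interior_subset ht)).hasDerivWithinAt)
    (fun t ht => hf' t (interior_subset ht))

/-- The integrating factor `exp (-∫ a)` makes `f · exp (-∫ a)` constant; `a` is continued to the
left of `t₀` by `a t₀` only to have a globally continuous integrand. -/
theorem nonneg_of_hasDerivAt_eq_mul {a f : ℝ → ℝ} {t₀ : ℝ} (ha : ContinuousOn a (Ici t₀))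
    (hf : ∀ t ≥ t₀, HasDerivAt f (a t * f t) t) (h₀ : 0 ≤ f t₀) : ∀ t ≥ t₀, 0 ≤ f t := by
  set â : ℝ → ℝ := fun t => a (max t t₀)
  have hâ : Continuous â :=
    ha.comp_continuous (continuous_id.max continuous_const) fun t => le_max_right t t₀
  set u : ℝ → ℝ := fun t => ∫ s in t₀..t, â s
  have hu : ∀ t, HasDerivAt u (â t) t := fun t =>
    intervalIntegral.integral_hasDerivAt_right (hâ.intervalIntegrable _ _)
      hâ.aestronglyMeasurable.stronglyMeasurableAtFilter hâ.continuousAt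
  have hg : ∀ t ≥ t₀, HasDerivAt (fun s => f s * Real.exp (-u s)) 0 t := by
    intro t ht
    have hât : â t = a t := congrArg a (max_eq_left ht)
    refine ((hf t ht).mul (hu t).neg.exp).congr_deriv ?_
    rw [hât]
    ring
  have hmono := monotoneOn_Ici_of_hasDerivAt_nonneg hg fun _ _ => le_rfl
  intro t ht
  have hgt : f t₀ * Real.exp (-u t₀) ≤ f t * Real.exp (-u t) := hmono self_mem_Ici ht ht
  simp only [u, intervalIntegral.integral_same, neg_zero, Real.exp_zero, mul_one] at hgt
  exact nonneg_of_mul_nonneg_left (h₀.trans hgt) (Real.exp_pos _)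

theorem exists_tendsto_of_hasDerivAt_nonpos {f f' : ℝ → ℝ} {a m : ℝ}
    (hf : ∀ t ≥ a, HasDerivAt f (f' t) t) (hf' : ∀ t ≥ a, f' t ≤ 0) (hm : ∀ t ≥ a, m ≤ f t) :
    ∃ l, Tendsto f atTop (𝓝 l) := by
  have hanti : AntitoneOn f (Ici a) := fun s hs t ht hst => by
    simpa using monotoneOn_Ici_of_hasDerivAt_nonneg (fun t ht => (hf t ht).neg)
      (fun t ht => neg_nonneg.2 (hf' t ht)) hs ht hst
  set g : ℝ → ℝ := fun t => f (max t a)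
  have hg : Antitone g := fun s t hst =>
    hanti (le_max_right s a) (le_max_right t a) (max_le_max hst le_rfl)
  have hgm : BddBelow (range g) := ⟨m, by rintro _ ⟨t, rfl⟩; exact hm _ (le_max_right t a)⟩
  refine ⟨_, (tendsto_atTop_ciInf hg hgm).congr' ?_⟩
  filter_upwards [eventually_ge_atTop a] with t ht
  simp only [g, max_eq_left ht]

theorem tendsto_atTop_of_hasDerivAt_ge {f f' : ℝ → ℝ} {a k : ℝ} (hk : 0 < k)
    (hf : ∀ t ≥ a, HasDerivAt f (f' t) t) (hf' : ∀ t ≥ a, k ≤ f' t) :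
    Tendsto f atTop atTop := by
  have hmono : MonotoneOn (fun t => f t - k * t) (Ici a) :=
    monotoneOn_Ici_of_hasDerivAt_nonneg
      (fun t ht => (hf t ht).sub (((hasDerivAt_id t).const_mul k).congr_deriv (mul_one k)))
      (fun t ht => sub_nonneg.2 (hf' t ht))
  refine tendsto_atTop_mono' _ ?_
    (tendsto_atTop_add_const_left _ (f a - k * a) (tendsto_id.const_mul_atTop hk))
  filter_upwards [eventually_ge_atTop a] with t ht
  have := hmono self_mem_Ici ht ht
  simp only [id] at this ⊢
  linarith

theorem le_zero_of_tendsto_of_tendsto_deriv {f f' : ℝ → ℝ} {a l L : ℝ}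
    (hf : ∀ t ≥ a, HasDerivAt f (f' t) t) (hl : Tendsto f atTop (𝓝 l))
    (hL : Tendsto f' atTop (𝓝 L)) : L ≤ 0 := by
  by_contra! hpos
  obtain ⟨T, hT⟩ := (hL.eventually (lt_mem_nhds (half_lt_self hpos))).exists_forall_of_atTop
  exact not_tendsto_atTop_of_tendsto_nhds hl <|
    tendsto_atTop_of_hasDerivAt_ge (half_pos hpos) (a := max a T)
      (fun t ht => hf t (le_of_max_le_left ht)) (fun t ht => (hT t (le_of_max_le_right ht)).le)

theorem eq_zero_of_tendsto_of_tendsto_deriv {f f' : ℝ → ℝ} {a l L : ℝ}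
    (hf : ∀ t ≥ a, HasDerivAt f (f' t) t) (hl : Tendsto f atTop (𝓝 l))
    (hL : Tendsto f' atTop (𝓝 L)) : L = 0 :=
  le_antisymm (le_zero_of_tendsto_of_tendsto_deriv hf hl hL) <| neg_nonpos.1 <|
    le_zero_of_tendsto_of_tendsto_deriv (fun t ht => (hf t ht).neg) hl.neg hL.neg

theorem sir_informed_tendsto_zero_general
    (b c : ℝ) (hb : 0 < b) (hc : 0 < c) (S I : ℝ → ℝ)
    (hS : ∀ t ≥ (0 : ℝ), HasDerivAt S (-(b * I t * S t)) t)
    (hI : ∀ t ≥ (0 : ℝ), HasDerivAt I (b * I t * S t - c * I t) t)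
    (hS0 : 0 ≤ S 0) (hI0 : 0 ≤ I 0) :
    Filter.Tendsto I Filter.atTop (nhds 0) := by
  have hScont : ContinuousOn S (Ici 0) := fun t ht => (hS t ht).continuousAt.continuousWithinAt
  have hIcont : ContinuousOn I (Ici 0) := fun t ht => (hI t ht).continuousAt.continuousWithinAt
  have hI_nonneg : ∀ t ≥ (0 : ℝ), 0 ≤ I t :=
    nonneg_of_hasDerivAt_eq_mul (a := fun t => b * S t - c)
      ((continuousOn_const.mul hScont).sub continuousOn_const)
      (fun t ht => (hI t ht).congr_deriv (by ring)) hI0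
  have hS_nonneg : ∀ t ≥ (0 : ℝ), 0 ≤ S t :=
    nonneg_of_hasDerivAt_eq_mul (a := fun t => -(b * I t)) (continuousOn_const.mul hIcont).neg
      (fun t ht => (hS t ht).congr_deriv (by ring)) hS0
  have hSI : ∀ t ≥ (0 : ℝ), HasDerivAt (S + I) (-(c * I t)) t := fun t ht =>
    ((hS t ht).add (hI t ht)).congr_deriv (by ring)
  obtain ⟨lS, hlS⟩ := exists_tendsto_of_hasDerivAt_nonpos hS
    (fun t ht => neg_nonpos.2 (mul_nonneg (mul_nonneg hb.le (hI_nonneg t ht)) (hS_nonneg t ht)))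
    hS_nonneg
  obtain ⟨lSI, hlSI⟩ := exists_tendsto_of_hasDerivAt_nonpos hSI
    (fun t ht => neg_nonpos.2 (mul_nonneg hc.le (hI_nonneg t ht)))
    (fun t ht => add_nonneg (hS_nonneg t ht) (hI_nonneg t ht))
  have hlI : Tendsto I atTop (𝓝 (lSI - lS)) :=
    (hlSI.sub hlS).congr fun t => add_sub_cancel_left (S t) (I t)
  have hcl : -(c * (lSI - lS)) = 0 :=
    eq_zero_of_tendsto_of_tendsto_deriv hSI hlSI (hlI.const_mul c).neg
  rwa [(mul_eq_zero.1 (neg_eq_zero.1 hcl)).resolve_left hc.ne'] at hlI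

/-- Extinction of the informed compartment: `I t → 0` as `t → ∞`. -/
theorem sir_informed_tendsto_zero
    (b c : ℝ) (hb : 0 < b) (hc : 0 < c) (S I R : ℝ → ℝ)
    (hS : ∀ t ≥ (0 : ℝ), HasDerivAt S (-(b * I t * S t)) t)
    (hI : ∀ t ≥ (0 : ℝ), HasDerivAt I (b * I t * S t - c * I t) t)
    (hR : ∀ t ≥ (0 : ℝ), HasDerivAt R (c * I t) t)
    (hS0 : 0 ≤ S 0) (hI0 : 0 ≤ I 0) (hR0 : 0 ≤ R 0) :
    Filter.Tendsto I Filter.atTop (nhds 0) :=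
  sir_informed_tendsto_zero_general b c hb hc S I hS hI hS0 hI0
end

section
/- Proposition 1, subthreshold case: if the effective reproduction number satisfies R_e = b·S(0)/c ≤ 1, and S(0) ≥ 0, I(0) ≥ 0, R(0) ≥ 0, then I is nonincreasing on [0,∞) and I(t) → 0 as t → ∞. -/
/-!
Both `S` and `I` solve linear equations `f' = g f`, so they stay nonnegative. Hence `S` decreases,
`b S ≤ b S(0) ≤ c`, and `I' = (b S - c) I ≤ 0`. Since `(S + I)' = -c I`, a positive lower bound
`ε` for `I` would make the nonnegative quantity `S + I` decrease at rate at least `c ε` forever,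
which is impossible; so the decreasing nonnegative `I` tends to `0`.
-/

open Set Filter Topology

theorem antitoneOn_Ici_of_hasDerivAt_nonpos {f f' : ℝ → ℝ} {a : ℝ}
    (hf : ∀ t ≥ a, HasDerivAt f (f' t) t) (hf' : ∀ t ≥ a, f' t ≤ 0) :
    AntitoneOn f (Ici a) :=
  antitoneOn_of_hasDerivWithinAt_nonpos (convex_Ici a) (HasDerivAt.continuousOn hf)
    (fun t ht => (hf t (interior_subset ht)).hasDerivWithinAt)
    (fun t ht => hf' t (interior_subset ht))

theorem nonneg_of_hasDerivAt_mul_self {f g : ℝ → ℝ} {a : ℝ}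
    (hf : ∀ t ≥ a, HasDerivAt f (g t * f t) t) (hg : ContinuousOn g (Ici a))
    (hfa : 0 ≤ f a) : ∀ t ≥ a, 0 ≤ f t := by
  intro t hat
  by_contra! hft
  obtain ⟨t₀, ht₀, hft₀⟩ : ∃ t₀ ∈ Icc a t, f t₀ = 0 :=
    intermediate_value_Icc' hat (HasDerivAt.continuousOn fun x hx => hf x hx.1) ⟨hft.le, hfa⟩
  obtain ⟨K, hK⟩ := isCompact_Icc.exists_bound_of_continuousOn (hg.mono Icc_subset_Ici_self)
  -- Grönwall: a solution of `f' = g f` vanishing at `t₀` vanishes afterwards.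
  have hzero := eq_zero_of_abs_deriv_le_mul_abs_self_of_eq_zero_right (K := K) (a := t₀) (b := t)
    (HasDerivAt.continuousOn fun x hx => hf x (ht₀.1.trans hx.1))
    (fun x hx => (hf x (ht₀.1.trans hx.1)).hasDerivWithinAt) hft₀
    (fun x hx => by
      rw [norm_mul]
      exact mul_le_mul_of_nonneg_right (hK x ⟨ht₀.1.trans hx.1, hx.2.le⟩) (norm_nonneg _))
  exact hft.ne (hzero t ⟨ht₀.2, le_rfl⟩)

theorem exists_neg_of_hasDerivAt_le_neg {f f' : ℝ → ℝ} {a δ : ℝ} (hδ : 0 < δ)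
    (hf : ∀ t ≥ a, HasDerivAt f (f' t) t) (hf' : ∀ t ≥ a, f' t ≤ -δ) :
    ∃ t ≥ a, f t < 0 := by
  have hanti : AntitoneOn (fun t => f t + δ * t) (Ici a) :=
    antitoneOn_Ici_of_hasDerivAt_nonpos (f' := fun t => f' t + δ)
      (fun t ht => by simpa using (hf t ht).fun_add ((hasDerivAt_id' t).const_mul δ))
      (fun t ht => by linarith [hf' t ht])
  set t := a + (|f a| + 1) / δ
  have hat : a ≤ t := le_add_of_nonneg_right (by positivity)
  refine ⟨t, hat, ?_⟩
  have hdecay : f t + δ * t ≤ f a + δ * a := hanti self_mem_Ici hat hat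
  have hδt : δ * t = δ * a + (|f a| + 1) := by
    simp only [t, mul_add, mul_div_cancel₀ _ hδ.ne']
  linarith [le_abs_self (f a)]

theorem tendsto_zero_of_antitoneOn_Ici {f : ℝ → ℝ} {a : ℝ} (hanti : AntitoneOn f (Ici a))
    (hnonneg : ∀ t ≥ a, 0 ≤ f t) (hsmall : ∀ ε > 0, ∃ t ≥ a, f t < ε) :
    Tendsto f atTop (𝓝 0) := by
  rw [Metric.tendsto_atTop]
  intro ε hε
  obtain ⟨t₀, ht₀, hft₀⟩ := hsmall ε hε
  refine ⟨t₀, fun t ht => ?_⟩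
  rw [Real.dist_eq, sub_zero, abs_of_nonneg (hnonneg t (ht₀.trans ht))]
  exact (hanti ht₀ (ht₀.trans ht) ht).trans_lt hft₀

theorem sir_subthreshold_informed_decreases_general
    (b c : ℝ) (hb : 0 < b) (hc : 0 < c) (S I : ℝ → ℝ)
    (hS : ∀ t ≥ (0 : ℝ), HasDerivAt S (-(b * I t * S t)) t)
    (hI : ∀ t ≥ (0 : ℝ), HasDerivAt I (b * I t * S t - c * I t) t)
    (hS0 : 0 ≤ S 0) (hI0 : 0 ≤ I 0)
    (hRe : b * S 0 / c ≤ 1) :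
    AntitoneOn I (Set.Ici (0 : ℝ)) ∧ Filter.Tendsto I Filter.atTop (nhds 0) := by
  have hSnonneg : ∀ t ≥ (0 : ℝ), 0 ≤ S t :=
    nonneg_of_hasDerivAt_mul_self (g := fun t => -(b * I t))
      (fun t ht => by convert hS t ht using 1; ring)
      (continuousOn_const.mul (HasDerivAt.continuousOn hI)).neg hS0
  have hInonneg : ∀ t ≥ (0 : ℝ), 0 ≤ I t :=
    nonneg_of_hasDerivAt_mul_self (g := fun t => b * S t - c)
      (fun t ht => by convert hI t ht using 1; ring)
      ((continuousOn_const.mul (HasDerivAt.continuousOn hS)).sub continuousOn_const) hI0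
  have hSanti : AntitoneOn S (Ici 0) :=
    antitoneOn_Ici_of_hasDerivAt_nonpos hS
      fun t ht => neg_nonpos.mpr (mul_nonneg (mul_nonneg hb.le (hInonneg t ht)) (hSnonneg t ht))
  have hbS : ∀ t ≥ (0 : ℝ), b * S t ≤ c := fun t ht =>
    calc b * S t ≤ b * S 0 := by gcongr; exact hSanti self_mem_Ici ht ht
      _ ≤ c := (div_le_one hc).mp hRe
  have hIanti : AntitoneOn I (Ici 0) :=
    antitoneOn_Ici_of_hasDerivAt_nonpos hI
      fun t ht => by nlinarith [hbS t ht, hInonneg t ht]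
  refine ⟨hIanti, tendsto_zero_of_antitoneOn_Ici hIanti hInonneg fun ε hε => ?_⟩
  by_contra! hIge
  obtain ⟨t, ht, hneg⟩ := exists_neg_of_hasDerivAt_le_neg (mul_pos hc hε)
    (fun t ht => (hS t ht).add (hI t ht)) (fun t ht => by nlinarith [hIge t ht])
  linarith [Pi.add_apply S I t, hSnonneg t ht, hInonneg t ht]

/-- Proposition 1, subthreshold case: if `R_e = b * S 0 / c ≤ 1`, then `I` is
nonincreasing on `[0,∞)` and `I t → 0` as `t → ∞`. -/
theorem sir_subthreshold_informed_decreases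
    (b c : ℝ) (hb : 0 < b) (hc : 0 < c) (S I R : ℝ → ℝ)
    (hS : ∀ t ≥ (0 : ℝ), HasDerivAt S (-(b * I t * S t)) t)
    (hI : ∀ t ≥ (0 : ℝ), HasDerivAt I (b * I t * S t - c * I t) t)
    (hR : ∀ t ≥ (0 : ℝ), HasDerivAt R (c * I t) t)
    (hS0 : 0 ≤ S 0) (hI0 : 0 ≤ I 0) (hR0 : 0 ≤ R 0)
    (hRe : b * S 0 / c ≤ 1) :
    AntitoneOn I (Set.Ici (0 : ℝ)) ∧ Filter.Tendsto I Filter.atTop (nhds 0) :=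
  sir_subthreshold_informed_decreases_general b c hb hc S I hS hI hS0 hI0 hRe
end
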